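/- arXiv:1303.5362 — 9 statements merged into one kernel-verified Lean document; each statement's English description precedes it below -/
import Mathlib

section
/- Let (u,w) ∈ ℝ × ℝ with w > 0. Then the steady-state equations (a1·u·w/(1+u·w) − d1)·u = 0 and −w − u²·w + κ1 = 0 hold simultaneously if and only if (u,w) = (0, κ1), or (u,w) = (u₊, w₊), or (u,w) = (u₋, w₋). In particular, the kinetic system has exactly three constant steady states with positive w-component. -/
/-!
For `u ≠ 0` the first equation says exactly `u * w = c` with `c = d1 / (a1 - d1)`. On that curve,
multiplying the second equation by `w` turns it into `w ^ 2 - κ1 * w + c ^ 2 = 0`, whose roots are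
`w₊` and `w₋` (real because `2 * c < κ1`, nonzero because their product is `c ^ 2`), and then
`u = c / w`.
-/

theorem mul_div_one_add_sub_eq_zero_iff {a d x : ℝ} (hd : d ≠ 0) (had : a ≠ d) (ha : a ≠ 0) :
    a * x / (1 + x) - d = 0 ↔ x = d / (a - d) := by
  by_cases hx : 1 + x = 0
  · have hx' : x = -1 := by linarith
    rw [hx, div_zero, zero_sub, neg_eq_zero, hx', eq_div_iff (sub_ne_zero.2 had)]
    constructor <;> intro h
    · exact absurd h hd
    · exact absurd (by linarith) ha
  · rw [sub_eq_zero, div_eq_iff hx, eq_div_iff (sub_ne_zero.2 had)]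
    constructor <;> intro h <;> linear_combination h

theorem sq_sub_mul_add_eq_zero_iff {p q w : ℝ} (h : q ≤ (p / 2) ^ 2) :
    w ^ 2 - p * w + q = 0 ↔
      w = p / 2 + √((p / 2) ^ 2 - q) ∨ w = p / 2 - √((p / 2) ^ 2 - q) := by
  have hs := Real.sq_sqrt (sub_nonneg.2 h)
  rw [← sub_eq_zero (a := w), ← sub_eq_zero (a := w), ← mul_eq_zero]
  constructor <;> intro h'
  · linear_combination h' - hs
  · linear_combination h' + hs

theorem mul_eq_and_neg_sub_sq_mul_add_eq_zero_iff {c κ u w : ℝ} (hc : c ≠ 0) :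
    (u * w = c ∧ -w - u ^ 2 * w + κ = 0) ↔ (w ^ 2 - κ * w + c ^ 2 = 0 ∧ u = c / w) := by
  constructor
  · rintro ⟨huw, h⟩
    have hw : w ≠ 0 := by rintro rfl; exact hc (by simpa using huw.symm)
    exact ⟨by linear_combination (-w) * h - (u * w + c) * huw, (eq_div_iff hw).2 huw⟩
  · rintro ⟨hq, rfl⟩
    have hw : w ≠ 0 := by rintro rfl; exact hc (by simpa using hq)
    refine ⟨div_mul_cancel₀ c hw, ?_⟩
    field_simp
    linear_combination -hq

theorem stmt_0_general (a1 d1 κ1 : ℝ) (hd1 : 0 < d1)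
    (had : d1 < a1) (hκ : 2 * d1 / (a1 - d1) < κ1)
    (wp wm up um : ℝ)
    (hwp : wp = κ1 / 2 + Real.sqrt ((κ1 / 2) ^ 2 - (d1 / (a1 - d1)) ^ 2))
    (hwm : wm = κ1 / 2 - Real.sqrt ((κ1 / 2) ^ 2 - (d1 / (a1 - d1)) ^ 2))
    (hup : up = (d1 / (a1 - d1)) / wp)
    (hum : um = (d1 / (a1 - d1)) / wm)
    (u w : ℝ) :
    ((a1 * u * w / (1 + u * w) - d1) * u = 0 ∧ -w - u ^ 2 * w + κ1 = 0) ↔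
      (u = 0 ∧ w = κ1) ∨ (u = up ∧ w = wp) ∨ (u = um ∧ w = wm) := by
  subst hwp hwm hup hum
  set c := d1 / (a1 - d1) with hc_def
  have hc : 0 < c := div_pos hd1 (sub_pos.2 had)
  have hdisc : c ^ 2 ≤ (κ1 / 2) ^ 2 :=
    pow_le_pow_left₀ hc.le (by linarith [mul_div_assoc 2 d1 (a1 - d1)]) 2
  rw [mul_eq_zero, mul_assoc,
    mul_div_one_add_sub_eq_zero_iff hd1.ne' had.ne' (hd1.trans had).ne', ← hc_def, or_comm,
    or_and_right, mul_eq_and_neg_sub_sq_mul_add_eq_zero_iff hc.ne',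
    sq_sub_mul_add_eq_zero_iff hdisc, or_and_right]
  refine or_congr (and_congr_right fun hu => ?_) (or_congr ?_ ?_)
  · subst hu
    constructor <;> intro h <;> linarith
  all_goals exact and_comm.trans (and_congr_left fun hw => by rw [hw])

/-- Steady states of the kinetic system: with `w > 0`, the steady-state equations
`(a1·u·w/(1+u·w) − d1)·u = 0` and `−w − u²·w + κ1 = 0` hold iff `(u,w)` is one of the
three constant steady states `(0, κ1)`, `(u₊, w₊)`, `(u₋, w₋)`. -/
theorem stmt_0 (a1 d1 κ1 : ℝ) (ha1 : 0 < a1) (hd1 : 0 < d1) (hκ1 : 0 < κ1)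
    (had : d1 < a1) (hκ : 2 * d1 / (a1 - d1) < κ1)
    (wp wm up um : ℝ)
    (hwp : wp = κ1 / 2 + Real.sqrt ((κ1 / 2) ^ 2 - (d1 / (a1 - d1)) ^ 2))
    (hwm : wm = κ1 / 2 - Real.sqrt ((κ1 / 2) ^ 2 - (d1 / (a1 - d1)) ^ 2))
    (hup : up = (d1 / (a1 - d1)) / wp)
    (hum : um = (d1 / (a1 - d1)) / wm)
    (u w : ℝ) (hw : 0 < w) :
    ((a1 * u * w / (1 + u * w) - d1) * u = 0 ∧ -w - u ^ 2 * w + κ1 = 0) ↔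
      (u = 0 ∧ w = κ1) ∨ (u = up ∧ w = wp) ∨ (u = um ∧ w = wm) :=
  stmt_0_general a1 d1 κ1 hd1 had hκ wp wm up um hwp hwm hup hum u w
end

section
/- The determinant of J(w₊) is negative, and consequently J(w₊) has a positive real eigenvalue: there exists λ > 0 such that ((a1−d1)·d1/a1 − λ)·(−(1 + (d1/((a1−d1)·w₊))²) − λ) − (d1²/(a1·w₊²))·(−2·d1/(a1−d1)) = 0. Hence (u₊, w₊) is an unstable steady state of the kinetic system. -/
/-!
At the steady state `(d/((a-d)w), w)` the determinant of the Jacobian equals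
`d (d² - ((a-d)w)²) / (a (a-d) w²)`, which is negative as soon as `w > d/(a-d)`; the larger root
`w₊ ≥ κ/2` of `w² - κw + (d/(a-d))² = 0` satisfies this because `κ/2 > d/(a-d)`.
A real 2×2 matrix of negative determinant has eigenvalues of opposite signs, in particular a
positive one.
-/

namespace Matrix

theorem det_sub_smul_one_fin_two (M : Matrix (Fin 2) (Fin 2) ℝ) (t : ℝ) :
    (M - t • (1 : Matrix (Fin 2) (Fin 2) ℝ)).det = (M 0 0 - t) * (M 1 1 - t) - M 0 1 * M 1 0 := by
  simp [det_fin_two]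

theorem exists_pos_det_sub_smul_one_eq_zero_of_det_neg {M : Matrix (Fin 2) (Fin 2) ℝ}
    (hM : M.det < 0) : ∃ t : ℝ, 0 < t ∧ (M - t • (1 : Matrix (Fin 2) (Fin 2) ℝ)).det = 0 := by
  rw [det_fin_two] at hM
  set T := M 0 0 + M 1 1
  set Δ := M 0 0 * M 1 1 - M 0 1 * M 1 0
  -- the larger root of `t² - T t + Δ`; it is positive because `Δ < 0` forces `√(T² - 4Δ) > |T|`
  have hdisc : 0 ≤ T ^ 2 - 4 * Δ := by nlinarith [sq_nonneg T]
  set s := √(T ^ 2 - 4 * Δ)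
  have hs : 0 ≤ s := Real.sqrt_nonneg _
  have hs2 : s ^ 2 = T ^ 2 - 4 * Δ := Real.sq_sqrt hdisc
  refine ⟨(T + s) / 2, by nlinarith [sq_nonneg (s - T)], ?_⟩
  rw [det_sub_smul_one_fin_two]
  linear_combination hs2 / 4

end Matrix

/-- The Jacobian `J(w)` of the kinetic system at the steady state `(d/((a-d)w), w)`. -/
noncomputable def jacobian (a d w : ℝ) : Matrix (Fin 2) (Fin 2) ℝ :=
  !![(a - d) * d / a, d ^ 2 / (a * w ^ 2); -2 * d / (a - d), -(1 + (d / ((a - d) * w)) ^ 2)]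

theorem jacobian_det_eq {a d w : ℝ} (ha : a ≠ 0) (had : a - d ≠ 0) (hw : w ≠ 0) :
    (jacobian a d w).det = d * (d ^ 2 - ((a - d) * w) ^ 2) / (a * (a - d) * w ^ 2) := by
  rw [jacobian, Matrix.det_fin_two_of]
  field_simp
  ring

theorem jacobian_det_neg {a d w : ℝ} (ha : 0 < a) (hd : 0 < d) (had : d < a)
    (hw : d / (a - d) < w) : (jacobian a d w).det < 0 := by
  have had' : 0 < a - d := sub_pos.mpr had
  have hw0 : 0 < w := (div_pos hd had').trans hw
  have hdw : d < (a - d) * w := by rwa [div_lt_iff₀' had'] at hw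
  rw [jacobian_det_eq ha.ne' had'.ne' hw0.ne']
  refine div_neg_of_neg_of_pos (mul_neg_of_pos_of_neg hd ?_) (by positivity)
  nlinarith

theorem stmt_4_general (a1 d1 κ1 : ℝ) (ha1 : 0 < a1) (hd1 : 0 < d1)
    (had : d1 < a1) (hκ : 2 * d1 / (a1 - d1) < κ1)
    (wp : ℝ)
    (hwp : wp = κ1 / 2 + Real.sqrt ((κ1 / 2) ^ 2 - (d1 / (a1 - d1)) ^ 2)) :
    ((a1 - d1) * d1 / a1) * (-(1 + (d1 / ((a1 - d1) * wp)) ^ 2)) -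
        (d1 ^ 2 / (a1 * wp ^ 2)) * (-2 * d1 / (a1 - d1)) < 0 ∧
      ∃ lam : ℝ, 0 < lam ∧
        ((a1 - d1) * d1 / a1 - lam) * (-(1 + (d1 / ((a1 - d1) * wp)) ^ 2) - lam) -
          (d1 ^ 2 / (a1 * wp ^ 2)) * (-2 * d1 / (a1 - d1)) = 0 := by
  have hwp_gt : d1 / (a1 - d1) < wp := by
    have : d1 / (a1 - d1) < κ1 / 2 := by rw [mul_div_assoc] at hκ; linarith
    rw [hwp]
    linarith [Real.sqrt_nonneg ((κ1 / 2) ^ 2 - (d1 / (a1 - d1)) ^ 2)]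
  have hdet := jacobian_det_neg ha1 hd1 had hwp_gt
  obtain ⟨lam, hlam, hchar⟩ := Matrix.exists_pos_det_sub_smul_one_eq_zero_of_det_neg hdet
  rw [Matrix.det_sub_smul_one_fin_two] at hchar
  rw [jacobian, Matrix.det_fin_two_of] at hdet
  exact ⟨hdet, lam, hlam, hchar⟩

/-- `det J(w₊) < 0`, hence `J(w₊)` has a positive real eigenvalue: there is `λ > 0`
solving the characteristic equation of `J(w₊)`. Thus `(u₊, w₊)` is an unstable steady
state of the kinetic system. -/
theorem stmt_4 (a1 d1 κ1 : ℝ) (ha1 : 0 < a1) (hd1 : 0 < d1) (hκ1 : 0 < κ1)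
    (had : d1 < a1) (hκ : 2 * d1 / (a1 - d1) < κ1)
    (wp : ℝ)
    (hwp : wp = κ1 / 2 + Real.sqrt ((κ1 / 2) ^ 2 - (d1 / (a1 - d1)) ^ 2)) :
    ((a1 - d1) * d1 / a1) * (-(1 + (d1 / ((a1 - d1) * wp)) ^ 2)) -
        (d1 ^ 2 / (a1 * wp ^ 2)) * (-2 * d1 / (a1 - d1)) < 0 ∧
      ∃ lam : ℝ, 0 < lam ∧
        ((a1 - d1) * d1 / a1 - lam) * (-(1 + (d1 / ((a1 - d1) * wp)) ^ 2) - lam) -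
          (d1 ^ 2 / (a1 * wp ^ 2)) * (-2 * d1 / (a1 - d1)) = 0 :=
  stmt_4_general a1 d1 κ1 ha1 hd1 had hκ wp hwp
end

section
/- If in addition κ1² > 2·d1³/(a1·(a1−d1)), then the trace of J(w₋) is negative; combined with det J(w₋) > 0, this implies that every complex root λ of the characteristic equation λ² − trace(J(w₋))·λ + det(J(w₋)) = 0 has negative real part, i.e. (u₋, w₋) is a linearly stable steady state of the kinetic system. -/
/-!
The steady-state value `w₋` is the smaller root of `w² − κ₁ w + c² = 0` with `c = d₁/(a₁ − d₁)`,
so `0 < w₋ < c`. Writing `α = (a₁ − d₁) d₁ / a₁`, the Jacobian has `tr = α − 1 − (c/w₋)²` and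
`det = α ((c/w₋)² − 1)`, so `det > 0` because `w₋ < c`. For the trace, `κ₁ w₋ = w₋² + c² < 2c²`
together with `2αc² < κ₁²` gives `α w₋ < κ₁`, hence `α w₋² < κ₁ w₋ = w₋² + c²`.
A real monic quadratic with negative trace and positive determinant has all roots in the open
left half-plane: a non-real root has real part `tr / 2`, and a real root `x ≥ 0` would make
`x² − tr·x + det` positive.
-/

open Complex

theorem re_neg_of_sq_sub_mul_add_eq_zero {t d : ℝ} (ht : t < 0) (hd : 0 < d) {z : ℂ}
    (hz : z ^ 2 - t * z + d = 0) : z.re < 0 := by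
  have hre : z.re ^ 2 - z.im ^ 2 - t * z.re + d = 0 := by
    simpa [sq] using congrArg re hz
  have him : (2 * z.re - t) * z.im = 0 := by
    have := congrArg im hz
    simp only [sq, sub_im, add_im, mul_im, ofReal_re, ofReal_im, zero_im] at this
    linarith
  rcases mul_eq_zero.mp him with hre_half | him_zero
  · linarith
  · rw [him_zero] at hre
    nlinarith

section LowerRoot

variable {k c w : ℝ}

theorem lower_root_spec (hc : 0 < c) (hck : 2 * c < k)
    (hw : w = k / 2 - √((k / 2) ^ 2 - c ^ 2)) :
    0 < w ∧ w < c ∧ w * (k - w) = c ^ 2 := by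
  have hdisc : 0 < (k / 2) ^ 2 - c ^ 2 := by nlinarith
  have hsq := Real.sq_sqrt hdisc.le
  have hsqrt_pos := Real.sqrt_pos.mpr hdisc
  have hsqrt_lt : √((k / 2) ^ 2 - c ^ 2) < k / 2 := by nlinarith
  have hroot : w * (k - w) = c ^ 2 := by subst hw; nlinarith
  have hw_pos : 0 < w := by linarith
  have hw_lt_half : w < k / 2 := by linarith
  exact ⟨hw_pos, by nlinarith, hroot⟩

theorem lower_root_trace_neg {α : ℝ} (hw : 0 < w) (hwc : w < c)
    (hroot : w * (k - w) = c ^ 2) (hk : 2 * α * c ^ 2 < k ^ 2) :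
    α - 1 - (c / w) ^ 2 < 0 := by
  have hkw : k * w < 2 * c ^ 2 := by nlinarith
  have hk_pos : 0 < k := by nlinarith
  have hαw : α * w < k := by
    rcases le_or_gt α 0 with hα | hα
    · nlinarith
    · nlinarith [mul_lt_mul_of_pos_left hkw hα]
  have hαw2 : α * w ^ 2 < w ^ 2 + c ^ 2 := by nlinarith [mul_lt_mul_of_pos_right hαw hw]
  rw [div_pow, sub_sub, sub_neg, one_add_div (by positivity), lt_div_iff₀ (by positivity)]
  exact hαw2

end LowerRoot

theorem stmt_6_general (a1 d1 κ1 : ℝ) (hd1 : 0 < d1)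
    (had : d1 < a1) (hκ : 2 * d1 / (a1 - d1) < κ1)
    (hκ2 : 2 * d1 ^ 3 / (a1 * (a1 - d1)) < κ1 ^ 2)
    (wm tr det : ℝ)
    (hwm : wm = κ1 / 2 - Real.sqrt ((κ1 / 2) ^ 2 - (d1 / (a1 - d1)) ^ 2))
    (htr : tr = (a1 - d1) * d1 / a1 + (-(1 + (d1 / ((a1 - d1) * wm)) ^ 2)))
    (hdet : det = ((a1 - d1) * d1 / a1) * (-(1 + (d1 / ((a1 - d1) * wm)) ^ 2)) -
      (d1 ^ 2 / (a1 * wm ^ 2)) * (-2 * d1 / (a1 - d1))) :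
    tr < 0 ∧
      ∀ lam : ℂ, lam ^ 2 - (tr : ℂ) * lam + (det : ℂ) = 0 → lam.re < 0 := by
  have hgap : 0 < a1 - d1 := sub_pos.mpr had
  have ha1 : 0 < a1 := hd1.trans had
  set c := d1 / (a1 - d1)
  set α := (a1 - d1) * d1 / a1
  have hc : 0 < c := by positivity
  have hα : 0 < α := by positivity
  obtain ⟨hwm_pos, hwm_lt, hroot⟩ := lower_root_spec hc (by rwa [mul_div_assoc] at hκ) hwm
  have hratio : d1 / ((a1 - d1) * wm) = c / wm := by rw [div_div]
  have htr' : tr = α - 1 - (c / wm) ^ 2 := by rw [htr, hratio]; ring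
  have hdet' : det = α * ((c / wm) ^ 2 - 1) := by
    rw [hdet, hratio]; simp only [c, α]; field_simp; ring
  have hκ2' : 2 * α * c ^ 2 < κ1 ^ 2 := by
    convert hκ2 using 1; simp only [c, α]; field_simp
  have htr_neg : tr < 0 := htr' ▸ lower_root_trace_neg hwm_pos hwm_lt hroot hκ2'
  have hdet_pos : 0 < det := by
    rw [hdet']
    refine mul_pos hα (sub_pos.mpr ?_)
    rw [one_lt_sq_iff_one_lt_abs, abs_of_pos (by positivity), one_lt_div hwm_pos]
    exact hwm_lt
  exact ⟨htr_neg, fun lam h => re_neg_of_sq_sub_mul_add_eq_zero htr_neg hdet_pos h⟩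

/-- If moreover `κ1² > 2·d1³/(a1·(a1−d1))`, then `trace J(w₋) < 0`; together with
`det J(w₋) > 0` this forces every complex root of `λ² − tr·λ + det = 0` to have negative
real part, i.e. `(u₋, w₋)` is a linearly stable steady state of the kinetic system. -/
theorem stmt_6 (a1 d1 κ1 : ℝ) (ha1 : 0 < a1) (hd1 : 0 < d1) (hκ1 : 0 < κ1)
    (had : d1 < a1) (hκ : 2 * d1 / (a1 - d1) < κ1)
    (hκ2 : 2 * d1 ^ 3 / (a1 * (a1 - d1)) < κ1 ^ 2)
    (wm tr det : ℝ)
    (hwm : wm = κ1 / 2 - Real.sqrt ((κ1 / 2) ^ 2 - (d1 / (a1 - d1)) ^ 2))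
    (htr : tr = (a1 - d1) * d1 / a1 + (-(1 + (d1 / ((a1 - d1) * wm)) ^ 2)))
    (hdet : det = ((a1 - d1) * d1 / a1) * (-(1 + (d1 / ((a1 - d1) * wm)) ^ 2)) -
      (d1 ^ 2 / (a1 * wm ^ 2)) * (-2 * d1 / (a1 - d1))) :
    tr < 0 ∧
      ∀ lam : ℂ, lam ^ 2 - (tr : ℂ) * lam + (det : ℂ) = 0 → lam.re < 0 :=
  stmt_6_general a1 d1 κ1 hd1 had hκ hκ2 wm tr det hwm htr hdet
end

section
/- Let a11, a12, a21, a22 be real numbers and Dw > 0. For k ∈ ℕ set c(k) := Dw·π²·k², Δ(k) := ((a11 + a22 − c(k))/2)² − (a11·a22 − a12·a21) + c(k)·a11, λ₊(k) := (a11 + a22 − c(k))/2 + √(Δ(k)) and λ₋(k) := (a11 + a22 − c(k))/2 − √(Δ(k)) (real square root). Then Δ(k) > 0 for all sufficiently large k, λ₊(k) converges to a11 as k → ∞, and λ₋(k) tends to −∞ as k → ∞. In particular, a11 and −∞ are the only limit points of the eigenvalues of the linearized reaction–diffusion–ODE operator. -/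
/-!
Writing `b = a22 - c(k)` and `p = a12·a21`, the discriminant is `Δ = ((a11 - b)/2)² + p` and
`λ±` are the roots of `(λ - a11)(λ - b) = p`. Since `b → -∞`, `Δ → ∞`; the factor
`λ₊ - b ≥ (a11 - b)/2` tends to `∞`, so `λ₊ - a11 = p / (λ₊ - b) → 0`,
while `λ₋ ≤ (a11 + b)/2 → -∞`.
-/

open Filter Topology

lemma larger_root_sub_eq_div {a b p : ℝ} (hΔ : 0 ≤ ((a - b) / 2) ^ 2 + p)
    (hpos : 0 < (a - b) / 2 + √(((a - b) / 2) ^ 2 + p)) :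
    (a + b) / 2 + √(((a - b) / 2) ^ 2 + p) - a =
      p / ((a - b) / 2 + √(((a - b) / 2) ^ 2 + p)) := by
  have hsq := Real.sq_sqrt hΔ
  rw [eq_div_iff hpos.ne']
  linear_combination hsq

section QuadraticRoots

variable {ι : Type*} {l : Filter ι} {a p : ℝ} {b : ι → ℝ}

lemma tendsto_half_sub_atTop (hb : Tendsto b l atBot) :
    Tendsto (fun i => (a - b i) / 2) l atTop :=
  (tendsto_atTop_add_const_left l a (tendsto_neg_atBot_atTop.comp hb)).atTop_div_const two_pos

lemma tendsto_discr_atTop (hb : Tendsto b l atBot) :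
    Tendsto (fun i => ((a - b i) / 2) ^ 2 + p) l atTop :=
  tendsto_atTop_add_const_right l p
    ((tendsto_pow_atTop two_ne_zero).comp (tendsto_half_sub_atTop hb))

lemma tendsto_larger_root (hb : Tendsto b l atBot) :
    Tendsto (fun i => (a + b i) / 2 + √(((a - b i) / 2) ^ 2 + p)) l (𝓝 a) := by
  have hden : Tendsto (fun i => (a - b i) / 2 + √(((a - b i) / 2) ^ 2 + p)) l atTop :=
    tendsto_atTop_mono (fun _ => le_add_of_nonneg_right (Real.sqrt_nonneg _))
      (tendsto_half_sub_atTop hb)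
  have hlim := (tendsto_const_nhds (x := a)).add ((tendsto_const_nhds (x := p)).div_atTop hden)
  rw [add_zero] at hlim
  refine hlim.congr' ?_
  filter_upwards [(tendsto_discr_atTop hb).eventually_ge_atTop 0, hden.eventually_gt_atTop 0]
    with i hΔ hpos
  rw [← larger_root_sub_eq_div hΔ hpos]
  ring

lemma tendsto_smaller_root (hb : Tendsto b l atBot) :
    Tendsto (fun i => (a + b i) / 2 - √(((a - b i) / 2) ^ 2 + p)) l atBot := by
  refine tendsto_atBot_mono (fun i => sub_le_self _ (Real.sqrt_nonneg _)) ?_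
  exact (tendsto_atBot_add_const_left l a hb).atBot_div_const two_pos

end QuadraticRoots

/-- Asymptotics of the roots of the dispersion relation: `Δ(k) > 0` for all large `k`,
`λ₊(k) → a11` and `λ₋(k) → −∞` as `k → ∞`. Thus `a11` and `−∞` are the only limit
points of the eigenvalues of the linearized reaction–diffusion–ODE operator. -/
theorem stmt_9 (a11 a12 a21 a22 Dw : ℝ) (hDw : 0 < Dw)
    (c Δ lp lm : ℕ → ℝ)
    (hc : ∀ k : ℕ, c k = Dw * Real.pi ^ 2 * (k : ℝ) ^ 2)
    (hΔ : ∀ k : ℕ, Δ k =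
      ((a11 + a22 - c k) / 2) ^ 2 - (a11 * a22 - a12 * a21) + c k * a11)
    (hlp : ∀ k : ℕ, lp k = (a11 + a22 - c k) / 2 + Real.sqrt (Δ k))
    (hlm : ∀ k : ℕ, lm k = (a11 + a22 - c k) / 2 - Real.sqrt (Δ k)) :
    (∃ N : ℕ, ∀ k ≥ N, 0 < Δ k) ∧
      Tendsto lp atTop (nhds a11) ∧
      Tendsto lm atTop atBot := by
  set b : ℕ → ℝ := fun k => a22 - c k
  have hc_top : Tendsto c atTop atTop :=
    (((tendsto_pow_atTop two_ne_zero).comp tendsto_natCast_atTop_atTop).const_mul_atTop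
      (by positivity)).congr fun k => (hc k).symm
  have hb : Tendsto b atTop atBot :=
    tendsto_atBot_add_const_left atTop a22 (tendsto_neg_atTop_atBot.comp hc_top)
  have hΔ_eq : Δ = fun k => ((a11 - b k) / 2) ^ 2 + a12 * a21 := by
    funext k
    rw [hΔ]
    ring
  have hlp_eq : lp = fun k => (a11 + b k) / 2 + √(((a11 - b k) / 2) ^ 2 + a12 * a21) := by
    funext k
    rw [hlp, hΔ_eq, add_sub_assoc]
  have hlm_eq : lm = fun k => (a11 + b k) / 2 - √(((a11 - b k) / 2) ^ 2 + a12 * a21) := by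
    funext k
    rw [hlm, hΔ_eq, add_sub_assoc]
  refine ⟨eventually_atTop.mp ?_, hlp_eq ▸ tendsto_larger_root hb,
    hlm_eq ▸ tendsto_smaller_root hb⟩
  exact hΔ_eq ▸ (tendsto_discr_atTop hb).eventually_gt_atTop 0
end

section
/- Assume a1 > d1 > 0 and Dw > 0, and let w > 0. Set a11 := (a1−d1)·d1/a1, a12 := d1²/(a1·w²), a21 := −2·d1/(a1−d1), a22 := −(1 + (d1/((a1−d1)·w))²) (the entries of J(w)). Then there exist N ∈ ℕ and a sequence λ : ℕ → ℝ such that for every k ≥ N one has λ(k) > 0 and disp(λ(k), k) = 0, and λ(k) → (a1−d1)·d1/a1 > 0 as k → ∞. In particular, the linearization of the reaction–diffusion–ODE system at the constant steady state (d1/((a1−d1)·w), w) possesses infinitely many positive eigenvalues, accumulating at (a1−d1)·d1/a1. -/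
/-!
The dispersion relation is the quadratic `(a₁₁ - λ)(b - λ) = a₁₂a₂₁` with `b = a₂₂ - Dw π² k²`.
As `k → ∞`, `b → -∞` and its larger root `λ = (a₁₁ + b + √((a₁₁ - b)² + 4a₁₂a₂₁))/2` tends to
`a₁₁`, because `√(u² + d) - u → 0` as `u → ∞`. Since `a₁₁ = (a₁ - d₁)d₁/a₁ > 0`, these roots are
eventually positive.
-/

open Filter Topology

namespace Real

theorem tendsto_sqrt_sq_add_sub_atTop (d : ℝ) :
    Tendsto (fun u => √(u ^ 2 + d) - u) atTop (𝓝 0) := by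
  have hsum : Tendsto (fun u => √(u ^ 2 + d) + u) atTop atTop :=
    tendsto_atTop_mono (fun _ => le_add_of_nonneg_left (sqrt_nonneg _)) tendsto_id
  have hEq : (fun u => d / (√(u ^ 2 + d) + u)) =ᶠ[atTop] fun u => √(u ^ 2 + d) - u := by
    filter_upwards [(tendsto_pow_atTop two_ne_zero).eventually_ge_atTop (-d),
      eventually_gt_atTop 0] with u hdisc hu
    have hs := sq_sqrt (show 0 ≤ u ^ 2 + d by linarith)
    have hpos : 0 < √(u ^ 2 + d) + u := by positivity
    rw [div_eq_iff hpos.ne']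
    linear_combination -hs
  exact (tendsto_const_nhds.div_atTop hsum).congr' hEq

end Real

theorem tendsto_const_sub_atBot_atTop (a : ℝ) :
    Tendsto (fun b : ℝ => a - b) atBot atTop :=
  tendsto_atTop_add_const_left _ _ tendsto_neg_atBot_atTop

/-- The larger root of `(a - x) * (b - x) = c`. -/
noncomputable def largerRoot (a b c : ℝ) : ℝ :=
  (a + b + √((a - b) ^ 2 + 4 * c)) / 2

theorem sub_largerRoot_mul_sub_largerRoot {a b c : ℝ} (h : 0 ≤ (a - b) ^ 2 + 4 * c) :
    (a - largerRoot a b c) * (b - largerRoot a b c) = c := by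
  unfold largerRoot
  linear_combination Real.sq_sqrt h / 4

theorem eventually_sub_largerRoot_mul_sub_largerRoot_atBot (a c : ℝ) :
    ∀ᶠ b in atBot, (a - largerRoot a b c) * (b - largerRoot a b c) = c := by
  have hu := tendsto_const_sub_atBot_atTop a
  filter_upwards [((tendsto_pow_atTop two_ne_zero).comp hu).eventually_ge_atTop (-4 * c)]
    with b hb
  exact sub_largerRoot_mul_sub_largerRoot (by simp only [Function.comp_apply] at hb; linarith)

theorem tendsto_largerRoot_atBot (a c : ℝ) :
    Tendsto (fun b => largerRoot a b c) atBot (𝓝 a) := by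
  have hu := tendsto_const_sub_atBot_atTop a
  have hlim := ((Real.tendsto_sqrt_sq_add_sub_atTop (4 * c)).comp hu).div_const 2 |>.const_add a
  rw [zero_div, add_zero] at hlim
  refine hlim.congr fun b => ?_
  simp only [Function.comp_apply, largerRoot]
  ring

theorem stmt_10_general (a1 d1 Dw : ℝ) (hd1 : 0 < d1) (had : d1 < a1) (hDw : 0 < Dw)
    (a11 a12 a21 a22 : ℝ)
    (h11 : a11 = (a1 - d1) * d1 / a1) :
    ∃ (N : ℕ) (lam : ℕ → ℝ),
      (∀ k ≥ N, 0 < lam k ∧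
        (a11 - lam k) * (a22 - Dw * Real.pi ^ 2 * (k : ℝ) ^ 2 - lam k) - a12 * a21 = 0) ∧
      Tendsto lam atTop (nhds ((a1 - d1) * d1 / a1)) ∧
      0 < (a1 - d1) * d1 / a1 := by
  have ha11 : 0 < a11 := by
    have : 0 < a1 - d1 := sub_pos.mpr had
    rw [h11]; exact div_pos (by positivity) (hd1.trans had)
  set b : ℕ → ℝ := fun k => a22 - Dw * Real.pi ^ 2 * (k : ℝ) ^ 2
  have hb : Tendsto b atTop atBot :=
    tendsto_atBot_add_const_left _ _ <| tendsto_neg_atTop_atBot.comp <|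
      (tendsto_pow_atTop two_ne_zero |>.comp tendsto_natCast_atTop_atTop).const_mul_atTop
        (by positivity)
  have hlim : Tendsto (fun k => largerRoot a11 (b k) (a12 * a21)) atTop (𝓝 a11) :=
    (tendsto_largerRoot_atBot a11 (a12 * a21)).comp hb
  obtain ⟨N, hN⟩ := eventually_atTop.mp <| (hlim.eventually (lt_mem_nhds ha11)).and
    (hb.eventually (eventually_sub_largerRoot_mul_sub_largerRoot_atBot a11 (a12 * a21)))
  refine ⟨N, fun k => largerRoot a11 (b k) (a12 * a21),
    fun k hk => ⟨(hN k hk).1, sub_eq_zero.mpr (hN k hk).2⟩, h11 ▸ hlim, h11 ▸ ha11⟩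

/-- Infinitely many positive eigenvalues: for the Jacobian entries of `J(w)`, there is a
sequence `λ(k)` of positive roots of the dispersion relation for all large `k`, which
converges to `(a1−d1)·d1/a1 > 0`. -/
theorem stmt_10 (a1 d1 Dw : ℝ) (hd1 : 0 < d1) (had : d1 < a1) (hDw : 0 < Dw)
    (w : ℝ) (hw : 0 < w)
    (a11 a12 a21 a22 : ℝ)
    (h11 : a11 = (a1 - d1) * d1 / a1)
    (h12 : a12 = d1 ^ 2 / (a1 * w ^ 2))
    (h21 : a21 = -2 * d1 / (a1 - d1))
    (h22 : a22 = -(1 + (d1 / ((a1 - d1) * w)) ^ 2)) :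
    ∃ (N : ℕ) (lam : ℕ → ℝ),
      (∀ k ≥ N, 0 < lam k ∧
        (a11 - lam k) * (a22 - Dw * Real.pi ^ 2 * (k : ℝ) ^ 2 - lam k) - a12 * a21 = 0) ∧
      Tendsto lam atTop (nhds ((a1 - d1) * d1 / a1)) ∧
      0 < (a1 - d1) * d1 / a1 :=
  stmt_10_general a1 d1 Dw hd1 had hDw a11 a12 a21 a22 h11
end

section
/- Let a11, a12, a21, a22 be real numbers, Dw > 0, k ∈ ℕ, and let λ ∈ ℝ satisfy λ ≠ a22 − Dw·π²·k² and disp(λ, k) = 0. Set ρ := a21/(λ − a22 + Dw·π²·k²), and define u(t,x) := exp(λ·t)·cos(k·π·x) and w(t,x) := ρ·exp(λ·t)·cos(k·π·x). Then for all real t and x: (i) the derivative of s ↦ u(s,x) at s = t equals a11·u(t,x) + a12·w(t,x); (ii) the derivative of s ↦ w(s,x) at s = t equals Dw·(second derivative of y ↦ w(t,y) at y = x) + a21·u(t,x) + a22·w(t,x); (iii) the derivative of y ↦ w(t,y) vanishes at y = 0 and at y = 1 (homogeneous Neumann boundary conditions). Thus e^{λ t}·(cos(kπx), ρ·cos(kπx))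 is an exact solution of the linearized reaction–diffusion–ODE system, growing exponentially when λ > 0. -/
/-!
The dispersion relation says exactly that `(1, ρ)` is an eigenvector, with eigenvalue `λ`, of the
mode-`k` reaction matrix `[[a11, a12], [a21, a22 − Dw π² k²]]`. Since `cos (kπx)` is a Neumann
eigenfunction of `∂ₓₓ` with eigenvalue `−π²k²`, the separated ansatz `e^{λt} (1, ρ) cos (kπx)`
therefore solves the linearized system.
-/

open Real

lemma dispersion_eigenvector {a11 a12 a21 a22 μ lam ρ : ℝ} (hne : lam ≠ a22 - μ)
    (hdisp : (a11 - lam) * (a22 - μ - lam) - a12 * a21 = 0)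
    (hρ : ρ = a21 / (lam - a22 + μ)) :
    a11 + a12 * ρ = lam ∧ a21 + (a22 - μ) * ρ = lam * ρ := by
  have hd : lam - a22 + μ ≠ 0 := fun h => hne (by linarith)
  have hρd : ρ * (lam - a22 + μ) = a21 := by rw [hρ]; field_simp
  refine ⟨?_, by linear_combination -hρd⟩
  have h : (a11 + a12 * ρ - lam) * (lam - a22 + μ) = 0 := by
    linear_combination -hdisp + a12 * hρd
  linarith [(mul_eq_zero.mp h).resolve_right hd]

lemma hasDerivAt_const_mul_exp_mul (c lam t : ℝ) :
    HasDerivAt (fun s => c * exp (lam * s)) (lam * (c * exp (lam * t))) t :=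
  (((hasDerivAt_id' t).const_mul lam).exp.const_mul c).congr_deriv (by ring)

lemma deriv_const_mul_cos_mul (C b : ℝ) :
    deriv (fun y => C * cos (b * y)) = fun y => -(C * b) * sin (b * y) :=
  funext fun y =>
    ((((hasDerivAt_id' y).const_mul b).cos.const_mul C).congr_deriv (by ring)).deriv

lemma deriv_deriv_const_mul_cos_mul (C b x : ℝ) :
    deriv (deriv fun y => C * cos (b * y)) x = -b ^ 2 * (C * cos (b * x)) := by
  rw [deriv_const_mul_cos_mul]
  exact ((((hasDerivAt_id' x).const_mul b).sin.const_mul (-(C * b))).congr_deriv (by ring)).deriv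

theorem stmt_13_general (a11 a12 a21 a22 Dw : ℝ) (k : ℕ) (lam ρ : ℝ)
    (hne : lam ≠ a22 - Dw * Real.pi ^ 2 * (k : ℝ) ^ 2)
    (hdisp : (a11 - lam) * (a22 - Dw * Real.pi ^ 2 * (k : ℝ) ^ 2 - lam) - a12 * a21 = 0)
    (hρ : ρ = a21 / (lam - a22 + Dw * Real.pi ^ 2 * (k : ℝ) ^ 2))
    (u w : ℝ → ℝ → ℝ)
    (hu : ∀ t x : ℝ, u t x = Real.exp (lam * t) * Real.cos ((k : ℝ) * Real.pi * x))
    (hw : ∀ t x : ℝ, w t x = ρ * Real.exp (lam * t) * Real.cos ((k : ℝ) * Real.pi * x)) :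
    ∀ t x : ℝ,
      HasDerivAt (fun s => u s x) (a11 * u t x + a12 * w t x) t ∧
      HasDerivAt (fun s => w s x)
        (Dw * deriv (deriv (fun y => w t y)) x + a21 * u t x + a22 * w t x) t ∧
      deriv (fun y => w t y) 0 = 0 ∧ deriv (fun y => w t y) 1 = 0 := by
  obtain ⟨hu_eig, hw_eig⟩ := dispersion_eigenvector hne hdisp hρ
  intro t x
  set b := (k : ℝ) * π
  have hu_t : (fun s => u s x) = fun s => cos (b * x) * exp (lam * s) := by
    funext s; rw [hu, mul_comm]
  have hw_t : (fun s => w s x) = fun s => ρ * cos (b * x) * exp (lam * s) := by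
    funext s; rw [hw]; ring
  have hw_x : (fun y => w t y) = fun y => ρ * exp (lam * t) * cos (b * y) := by
    funext y; rw [hw]
  refine ⟨?_, ?_, ?_, ?_⟩
  · rw [hu_t, hu, hw]
    convert hasDerivAt_const_mul_exp_mul (cos (b * x)) lam t using 1
    linear_combination exp (lam * t) * cos (b * x) * hu_eig
  · rw [hw_t, hw_x, deriv_deriv_const_mul_cos_mul, hu, hw]
    convert hasDerivAt_const_mul_exp_mul (ρ * cos (b * x)) lam t using 1
    linear_combination exp (lam * t) * cos (b * x) * hw_eig
  · rw [hw_x, deriv_const_mul_cos_mul]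
    simp
  · rw [hw_x, deriv_const_mul_cos_mul]
    simp [b, sin_nat_mul_pi]

/-- Exact exponential solutions of the linearized system: if `λ` is a root of the
dispersion relation for mode `k` (with `λ ≠ a22 − Dw·π²·k²`) and
`ρ = a21/(λ − a22 + Dw·π²·k²)`, then `u(t,x) = e^{λt}·cos(kπx)`,
`w(t,x) = ρ·e^{λt}·cos(kπx)` solve `∂ₜu = a11·u + a12·w`,
`∂ₜw = Dw·∂ₓₓw + a21·u + a22·w` with homogeneous Neumann boundary conditions for `w`. -/
theorem stmt_13 (a11 a12 a21 a22 Dw : ℝ) (hDw : 0 < Dw) (k : ℕ) (lam ρ : ℝ)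
    (hne : lam ≠ a22 - Dw * Real.pi ^ 2 * (k : ℝ) ^ 2)
    (hdisp : (a11 - lam) * (a22 - Dw * Real.pi ^ 2 * (k : ℝ) ^ 2 - lam) - a12 * a21 = 0)
    (hρ : ρ = a21 / (lam - a22 + Dw * Real.pi ^ 2 * (k : ℝ) ^ 2))
    (u w : ℝ → ℝ → ℝ)
    (hu : ∀ t x : ℝ, u t x = Real.exp (lam * t) * Real.cos ((k : ℝ) * Real.pi * x))
    (hw : ∀ t x : ℝ, w t x = ρ * Real.exp (lam * t) * Real.cos ((k : ℝ) * Real.pi * x)) :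
    ∀ t x : ℝ,
      HasDerivAt (fun s => u s x) (a11 * u t x + a12 * w t x) t ∧
      HasDerivAt (fun s => w s x)
        (Dw * deriv (deriv (fun y => w t y)) x + a21 * u t x + a22 * w t x) t ∧
      deriv (fun y => w t y) 0 = 0 ∧ deriv (fun y => w t y) 1 = 0 :=
  stmt_13_general a11 a12 a21 a22 Dw k lam ρ hne hdisp hρ u w hu hw
end

section
/- Let u, w : ℝ → ℝ be functions such that for every t ≥ 0, u is differentiable at t with derivative (a1·u(t)·w(t)/(1 + u(t)·w(t)) − d1)·u(t) and w is differentiable at t with derivative −w(t) − u(t)²·w(t) + κ1. If u(0) > 0 and w(0) > 0, then u(t) > 0 and w(t) > 0 for every t ≥ 0; i.e., solutions of the kinetic system with positive initial conditions remain positive for all time. -/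
/-! `u` and `w` stay positive up to the first time `τ` at which one of them fails to be positive.
Along `[0, τ]` the growth rate of `u` is at least `-d1`, so `u τ ≥ u 0 · exp (-d1 τ) > 0`; and if
`w τ ≤ 0`, then `w ≥ w τ` just left of `τ`, so `w' τ ≤ 0`, whereas
`w' τ = κ1 - (1 + u τ²) w τ > 0`. -/

open Set Filter Topology

theorem HasDerivAt.nonpos_of_le_left {f : ℝ → ℝ} {f' x : ℝ} (hf : HasDerivAt f f' x)
    (hle : ∀ᶠ s in 𝓝[<] x, f x ≤ f s) : f' ≤ 0 := by
  refine le_of_tendsto (hasDerivAt_iff_tendsto_slope_left_right.1 hf).1 ?_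
  filter_upwards [hle, self_mem_nhdsWithin] with s hs (hsx : s < x)
  rw [slope_def_field]
  exact div_nonpos_of_nonneg_of_nonpos (by linarith) (by linarith)

theorem le_mul_exp_of_hasDerivAt_mul_self {u g : ℝ → ℝ} {a b d : ℝ} (hab : a ≤ b)
    (hu : ∀ t ∈ Icc a b, HasDerivAt u (g t * u t) t) (hg : ∀ t ∈ Ioo a b, -d ≤ g t)
    (hu_nonneg : ∀ t ∈ Ioo a b, 0 ≤ u t) :
    u a ≤ u b * Real.exp (d * (b - a)) := by
  have hderiv : ∀ t ∈ Icc a b, HasDerivAt (fun s ↦ u s * Real.exp (d * s))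
      ((g t + d) * u t * Real.exp (d * t)) t := fun t ht ↦ by
    have hexp : HasDerivAt (fun s ↦ Real.exp (d * s)) (Real.exp (d * t) * d) t := by
      simpa using ((hasDerivAt_id t).const_mul d).exp
    exact ((hu t ht).mul hexp).congr_deriv (by ring)
  have hmono : MonotoneOn (fun s ↦ u s * Real.exp (d * s)) (Icc a b) := by
    refine monotoneOn_of_hasDerivWithinAt_nonneg (f' := fun t ↦ (g t + d) * u t * Real.exp (d * t))
      (convex_Icc a b)
      (fun t ht ↦ (hderiv t ht).continuousAt.continuousWithinAt) (fun t ht ↦ ?_) (fun t ht ↦ ?_)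
    · rw [interior_Icc] at ht
      exact (hderiv t (Ioo_subset_Icc_self ht)).hasDerivWithinAt
    · rw [interior_Icc] at ht
      exact mul_nonneg (mul_nonneg (by linarith [hg t ht]) (hu_nonneg t ht)) (Real.exp_pos _).le
  have := hmono (left_mem_Icc.2 hab) (right_mem_Icc.2 hab) hab
  rwa [mul_sub, Real.exp_sub, ← mul_div_assoc, le_div_iff₀ (Real.exp_pos _)]

theorem forall_pos_of_pos_at_first_exit {f : ℝ → ℝ} (hf : ContinuousOn f (Ici 0)) (h0 : 0 < f 0)
    (hexit : ∀ τ, 0 < τ → (∀ s ∈ Ico 0 τ, 0 < f s) → 0 < f τ) :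
    ∀ t, 0 ≤ t → 0 < f t := by
  by_contra! ⟨t, ht, hft⟩
  set K := Icc 0 t ∩ f ⁻¹' Iic 0
  have hK : IsCompact K := isCompact_Icc.of_isClosed_subset
    ((hf.mono Icc_subset_Ici_self).preimage_isClosed_of_isClosed isClosed_Icc isClosed_Iic)
    inter_subset_left
  obtain ⟨τ, ⟨⟨hτ0, hτt⟩, hfτ⟩, hτmin⟩ := hK.exists_isLeast ⟨t, ⟨ht, le_rfl⟩, hft⟩
  have hτpos : 0 < τ := hτ0.lt_of_ne (by rintro rfl; exact (not_le.2 h0) hfτ)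
  refine (not_lt.2 hfτ) (hexit τ hτpos fun s ⟨hs0, hsτ⟩ ↦ ?_)
  by_contra! hfs
  exact not_le.2 hsτ (hτmin ⟨⟨hs0, hsτ.le.trans hτt⟩, hfs⟩)

theorem stmt_14_general (a1 d1 κ1 : ℝ) (ha1 : 0 < a1) (hκ1 : 0 < κ1)
    (u w : ℝ → ℝ)
    (hu : ∀ t : ℝ, 0 ≤ t →
      HasDerivAt u ((a1 * u t * w t / (1 + u t * w t) - d1) * u t) t)
    (hw : ∀ t : ℝ, 0 ≤ t →
      HasDerivAt w (-w t - (u t) ^ 2 * w t + κ1) t)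
    (hu0 : 0 < u 0) (hw0 : 0 < w 0) :
    ∀ t : ℝ, 0 ≤ t → 0 < u t ∧ 0 < w t := by
  have hcont : ContinuousOn (fun t ↦ min (u t) (w t)) (Ici 0) := fun t ht ↦
    ContinuousAt.continuousWithinAt ((hu t ht).continuousAt.min (hw t ht).continuousAt)
  refine fun t ht ↦ lt_min_iff.1 (forall_pos_of_pos_at_first_exit hcont (lt_min hu0 hw0)
    (fun τ hτ hbefore ↦ lt_min_iff.2 ?_) t ht)
  simp only [lt_min_iff] at hbefore
  constructor
  · have hrate : ∀ t ∈ Ioo 0 τ, -d1 ≤ a1 * u t * w t / (1 + u t * w t) - d1 := fun t ht ↦ by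
      obtain ⟨hut, hwt⟩ := hbefore t (Ioo_subset_Ico_self ht)
      have : 0 ≤ a1 * u t * w t / (1 + u t * w t) := by positivity
      linarith
    have hgronwall := le_mul_exp_of_hasDerivAt_mul_self hτ.le (fun t ht ↦ hu t ht.1) hrate
      (fun t ht ↦ (hbefore t (Ioo_subset_Ico_self ht)).1.le)
    exact pos_of_mul_pos_left (hu0.trans_le hgronwall) (Real.exp_pos _).le
  · by_contra! hwτ
    have hle : ∀ᶠ s in 𝓝[<] τ, w τ ≤ w s := by
      filter_upwards [Ioo_mem_nhdsLT hτ] with s hs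
      exact hwτ.trans (hbefore s (Ioo_subset_Ico_self hs)).2.le
    have hderiv_nonpos := (hw τ hτ.le).nonpos_of_le_left hle
    nlinarith [sq_nonneg (u τ)]

/-- Positivity of solutions of the kinetic system: solutions of
`u' = (a1·u·w/(1+u·w) − d1)·u`, `w' = −w − u²·w + κ1` with positive initial conditions
remain positive for all `t ≥ 0`. -/
theorem stmt_14 (a1 d1 κ1 : ℝ) (ha1 : 0 < a1) (hd1 : 0 < d1) (hκ1 : 0 < κ1)
    (u w : ℝ → ℝ)
    (hu : ∀ t : ℝ, 0 ≤ t →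
      HasDerivAt u ((a1 * u t * w t / (1 + u t * w t) - d1) * u t) t)
    (hw : ∀ t : ℝ, 0 ≤ t →
      HasDerivAt w (-w t - (u t) ^ 2 * w t + κ1) t)
    (hu0 : 0 < u 0) (hw0 : 0 < w 0) :
    ∀ t : ℝ, 0 ≤ t → 0 < u t ∧ 0 < w t :=
  stmt_14_general a1 d1 κ1 ha1 hκ1 u w hu hw hu0 hw0
end

section
/- Let u, w : ℝ → ℝ be functions such that for every t ≥ 0, u is differentiable at t with derivative (a1·u(t)·w(t)/(1 + u(t)·w(t)) − d1)·u(t) and w is differentiable at t with derivative −w(t) − u(t)²·w(t) + κ1, and assume u(0) > 0 and w(0) > 0. Then for every ε > 0 there exists T ≥ 0 such that for all t ≥ T: w(t) ≤ κ1 + ε, (1/a1)·u(t) + w(t) ≤ κ1/min(d1,1) + ε, and u(t) ≤ (a1/min(d1,1))·κ1 + ε. In other words, limsup_{t→∞} w(t) ≤ κ1, limsup_{t→∞} ((1/a1)·u(t) + w(t)) ≤ κ1/min(d1,1), and limsup_{t→∞} u(t) ≤ a1·κ1/min(d1,1); in particular the solution of the kinetic system is uniformly bounded in time. -/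
/-!
`w` stays nonnegative because `w' = κ1 > 0` wherever `w` vanishes, and then `u` stays positive
because `u' ≥ -d1 u` as long as `u > 0`. For nonnegative `u, w` we have `w' + (w - κ1) = -u²w ≤ 0`,
and, since the saturated term `a1uw/(1+uw)` is at most `a1uw`, the Lyapunov function
`V = u/a1 + w` satisfies `V' + m (V - κ1/m) ≤ 0` with `m = min d1 1`. An integrating factor turns
each of these differential inequalities into exponential approach to the respective bound, and
`u ≤ a1 V` bounds `u`.
-/

open Set Filter Topology

theorem exists_first_nonpos {f : ℝ → ℝ} {a b : ℝ} (hab : a ≤ b) (hf : ContinuousOn f (Icc a b))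
    (ha : 0 < f a) (hb : f b ≤ 0) : ∃ c ∈ Ioc a b, f c ≤ 0 ∧ ∀ s ∈ Ico a c, 0 < f s := by
  set S := Icc a b ∩ f ⁻¹' Iic 0
  have hbdd : BddBelow S := ⟨a, fun x hx => hx.1.1⟩
  obtain ⟨⟨hac, hcb⟩, hc⟩ : sInf S ∈ S :=
    (hf.preimage_isClosed_of_isClosed isClosed_Icc isClosed_Iic).csInf_mem
      ⟨b, ⟨hab, le_rfl⟩, hb⟩ hbdd
  refine ⟨sInf S, ⟨hac.lt_of_ne ?_, hcb⟩, hc, fun s hs => ?_⟩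
  · intro h
    rw [← h] at hc
    exact hc.not_gt ha
  · by_contra! hfs
    exact (csInf_le hbdd ⟨⟨hs.1, hs.2.le.trans hcb⟩, hfs⟩).not_gt hs.2

theorem le_add_mul_exp_of_deriv_add_mul_le {f f' : ℝ → ℝ} {a b c K : ℝ} (hab : a ≤ b)
    (hf : ∀ t ∈ Icc a b, HasDerivAt f (f' t) t)
    (h : ∀ t ∈ Ioo a b, f' t + c * (f t - K) ≤ 0) :
    f b ≤ K + (f a - K) * Real.exp (-(c * (b - a))) := by
  set Φ : ℝ → ℝ := fun t => (f t - K) * Real.exp (c * t)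
  have hΦ : ∀ t ∈ Icc a b, HasDerivAt Φ ((f' t + c * (f t - K)) * Real.exp (c * t)) t := by
    intro t ht
    exact (((hf t ht).sub_const K).mul ((hasDerivAt_id' t).const_mul c).exp).congr_deriv
      (by ring)
  have hanti : AntitoneOn Φ (Icc a b) := by
    apply antitoneOn_of_deriv_nonpos (convex_Icc a b)
    · exact fun t ht => (hΦ t ht).continuousAt.continuousWithinAt
    · rw [interior_Icc]
      exact fun t ht => (hΦ t (Ioo_subset_Icc_self ht)).differentiableAt.differentiableWithinAt
    · rw [interior_Icc]
      intro t ht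
      rw [(hΦ t (Ioo_subset_Icc_self ht)).deriv]
      exact mul_nonpos_of_nonpos_of_nonneg (h t ht) (Real.exp_nonneg _)
  have hΦab : (f b - K) * Real.exp (c * b) ≤ (f a - K) * Real.exp (c * a) :=
    hanti (left_mem_Icc.2 hab) (right_mem_Icc.2 hab) hab
  have hsplit : Real.exp (c * a) = Real.exp (-(c * (b - a))) * Real.exp (c * b) := by
    rw [← Real.exp_add]
    ring_nf
  rw [hsplit, ← mul_assoc] at hΦab
  linarith [le_of_mul_le_mul_right hΦab (Real.exp_pos _)]

theorem eventually_le_add_of_deriv_add_mul_le {f f' : ℝ → ℝ} {a c K : ℝ} (hc : 0 < c)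
    (hf : ∀ t, a ≤ t → HasDerivAt f (f' t) t) (h : ∀ t, a < t → f' t + c * (f t - K) ≤ 0)
    {ε : ℝ} (hε : 0 < ε) : ∀ᶠ t in atTop, f t ≤ K + ε := by
  have hdecay : Tendsto (fun t => K + (f a - K) * Real.exp (-(c * (t - a)))) atTop
      (𝓝 (K + (f a - K) * 0)) :=
    ((Real.tendsto_exp_neg_atTop_nhds_zero.comp ((tendsto_atTop_add_const_right _ (-a)
      tendsto_id).const_mul_atTop hc)).const_mul _).const_add K
  filter_upwards [eventually_ge_atTop a,
    hdecay.eventually_lt_const (by linarith : K + (f a - K) * 0 < K + ε)] with t ht hlt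
  exact (le_add_mul_exp_of_deriv_add_mul_le ht (fun s hs => hf s hs.1)
    (fun s hs => h s hs.1)).trans hlt.le

theorem pos_of_deriv_add_mul_nonneg {f f' : ℝ → ℝ} {a c : ℝ}
    (hf : ∀ t, a ≤ t → HasDerivAt f (f' t) t) (ha : 0 < f a)
    (h : ∀ t, a < t → 0 < f t → 0 ≤ f' t + c * f t) {t : ℝ} (ht : a ≤ t) : 0 < f t := by
  by_contra! hft
  obtain ⟨b, ⟨hab, -⟩, hfb, hpos⟩ := exists_first_nonpos ht
    (fun s hs => (hf s hs.1).continuousAt.continuousWithinAt) ha hft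
  have hneg := le_add_mul_exp_of_deriv_add_mul_le (f := fun s => -f s) (f' := fun s => -f' s)
    (c := c) (K := 0) hab.le (fun s hs => (hf s hs.1).neg)
    (fun s hs => by linarith [h s hs.1 (hpos s ⟨hs.1.le, hs.2⟩)])
  have : 0 < f a * Real.exp (-(c * (b - a))) := mul_pos ha (Real.exp_pos _)
  linarith

theorem nonneg_of_deriv_pos_of_eq_zero {f f' : ℝ → ℝ} {a : ℝ}
    (hf : ∀ t, a ≤ t → HasDerivAt f (f' t) t) (ha : 0 ≤ f a)
    (h : ∀ t, a ≤ t → f t = 0 → 0 < f' t) {t : ℝ} (ht : a ≤ t) : 0 ≤ f t := by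
  have := image_le_of_deriv_right_lt_deriv_boundary (f := fun s => -f s) (f' := fun s => -f' s)
    (B := fun _ => 0) (B' := fun _ => 0) (b := t)
    (fun s hs => (hf s hs.1).neg.continuousAt.continuousWithinAt)
    (fun s hs => (hf s hs.1).neg.hasDerivWithinAt) (by simpa using ha)
    (fun _ => hasDerivAt_const _ _)
    (fun s hs hfs => by simpa using h s hs.1 (neg_eq_zero.mp hfs)) ⟨ht, le_rfl⟩
  simpa using this

theorem kinetic_lyapunov_deriv_le {a1 d1 κ1 m u w : ℝ} (ha1 : 0 < a1) (hm : 0 < m)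
    (hmd : m ≤ d1) (hm1 : m ≤ 1) (hu : 0 ≤ u) (hw : 0 ≤ w) :
    1 / a1 * ((a1 * u * w / (1 + u * w) - d1) * u) + (-w - u ^ 2 * w + κ1)
      + m * (1 / a1 * u + w - κ1 / m) ≤ 0 := by
  have huw : 0 ≤ u * w := mul_nonneg hu hw
  have hsat : 1 / a1 * (a1 * u * w / (1 + u * w) * u) ≤ u ^ 2 * w := by
    have : a1 * u * w / (1 + u * w) ≤ a1 * u * w :=
      div_le_self (by positivity) (by linarith)
    calc 1 / a1 * (a1 * u * w / (1 + u * w) * u) ≤ 1 / a1 * (a1 * u * w * u) := by gcongr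
      _ = u ^ 2 * w := by field_simp
  have hd : 1 / a1 * (m - d1) * u ≤ 0 :=
    mul_nonpos_of_nonpos_of_nonneg (mul_nonpos_of_nonneg_of_nonpos (by positivity) (by linarith)) hu
  have hκ : m * (κ1 / m) = κ1 := mul_div_cancel₀ κ1 hm.ne'
  nlinarith [mul_nonneg (sub_nonneg.2 hm1) hw]

/-- Uniform boundedness of the kinetic system: for solutions with positive initial data,
`limsup_{t→∞} w(t) ≤ κ1`, `limsup_{t→∞} ((1/a1)·u(t) + w(t)) ≤ κ1/min(d1,1)` and
`limsup_{t→∞} u(t) ≤ (a1/min(d1,1))·κ1`. -/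
theorem stmt_15 (a1 d1 κ1 : ℝ) (ha1 : 0 < a1) (hd1 : 0 < d1) (hκ1 : 0 < κ1)
    (u w : ℝ → ℝ)
    (hu : ∀ t : ℝ, 0 ≤ t →
      HasDerivAt u ((a1 * u t * w t / (1 + u t * w t) - d1) * u t) t)
    (hw : ∀ t : ℝ, 0 ≤ t →
      HasDerivAt w (-w t - (u t) ^ 2 * w t + κ1) t)
    (hu0 : 0 < u 0) (hw0 : 0 < w 0) :
    ∀ ε : ℝ, 0 < ε → ∃ T : ℝ, 0 ≤ T ∧ ∀ t : ℝ, T ≤ t →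
      w t ≤ κ1 + ε ∧
      (1 / a1) * u t + w t ≤ κ1 / min d1 1 + ε ∧
      u t ≤ (a1 / min d1 1) * κ1 + ε := by
  intro ε hε
  set m := min d1 1
  have hm : 0 < m := lt_min hd1 one_pos
  have hw_nonneg : ∀ t, 0 ≤ t → 0 ≤ w t := fun t ht =>
    nonneg_of_deriv_pos_of_eq_zero hw hw0.le (fun s _ hs => by simpa [hs] using hκ1) ht
  have hu_nonneg : ∀ t, 0 ≤ t → 0 ≤ u t := fun t ht =>
    (pos_of_deriv_add_mul_nonneg (c := d1) hu hu0 (fun s hs hus => by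
      have hws := hw_nonneg s hs.le
      have hgrowth : 0 ≤ a1 * u s * w s / (1 + u s * w s) * u s := by positivity
      linarith) ht).le
  have hw_bound := eventually_le_add_of_deriv_add_mul_le (c := 1) (K := κ1) one_pos hw
    (fun t ht => by nlinarith [mul_nonneg (sq_nonneg (u t)) (hw_nonneg t ht.le)]) hε
  have hV_bound : ∀ δ, 0 < δ → ∀ᶠ t in atTop, 1 / a1 * u t + w t ≤ κ1 / m + δ := fun δ hδ =>
    eventually_le_add_of_deriv_add_mul_le hm
      (fun t ht => ((hu t ht).const_mul (1 / a1)).add (hw t ht))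
      (fun t ht => kinetic_lyapunov_deriv_le ha1 hm (min_le_left _ _) (min_le_right _ _)
        (hu_nonneg t ht.le) (hw_nonneg t ht.le)) hδ
  obtain ⟨T, hT⟩ := eventually_atTop.mp
    ((hw_bound.and (hV_bound ε hε)).and (hV_bound (ε / a1) (div_pos hε ha1)))
  refine ⟨max T 0, le_max_right _ _, fun t ht => ?_⟩
  obtain ⟨⟨hwt, hVt⟩, hVt'⟩ := hT t (le_of_max_le_left ht)
  refine ⟨hwt, hVt, ?_⟩
  have hu_le : u t ≤ a1 * (1 / a1 * u t + w t) := by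
    have := hw_nonneg t (le_of_max_le_right ht)
    field_simp
    nlinarith
  calc u t ≤ a1 * (κ1 / m + ε / a1) := hu_le.trans (by gcongr)
    _ = a1 / m * κ1 + ε := by field_simp
end

section
/- Let Dw > 0 and let u, w : ℝ → ℝ → ℝ (first argument time, second argument space). Assume: (a) for every t ≥ 0 and every x ∈ [0,1], the map s ↦ w(s,x) is differentiable at t with derivative ∂ₜw(t,x) = Dw·(second derivative of y ↦ w(t,y) at y = x) − w(t,x) − u(t,x)²·w(t,x) + κ1; (b) for every t ≥ 0 the map x ↦ w(t,x) is twice continuously differentiable on [0,1] and its derivative vanishes at x = 0 and x = 1 (homogeneous Neumann boundary conditions); (c) (t,x) ↦ w(t,x) and (t,x) ↦ ∂ₜw(t,x) are continuous on [0,∞) × [0,1]; (d) w(t,x) ≥ 0 for all t ≥ 0 and x ∈ [0,1]. Then for every ε > 0 there exists T ≥ 0 such that ∫₀¹ w(t,x) dx ≤ κ1 + ε for all t ≥ T; i.e., limsup_{t→∞} ‖w(t,·)‖_{L¹(0,1)} ≤ κ1. -/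
/-!
Compare `w` with `φ t = κ1 + δ + A e^{-t}`, where `A` makes `w (0, ·) < φ 0`; note that
`φ' = κ1 + δ - φ`. At the first time `T` at which `w (T, ·)` reaches `φ T`, take a spatial
maximum point `z`. Then `∂ₜw (T, z) ≥ φ' T`. But the Neumann conditions force `∂ₓₓw (T, z) ≤ 0`,
also when `z` is an endpoint, so `∂ₜw (T, z) ≤ κ1 - w (T, z) ≤ κ1 - φ T < φ' T`. Hence `w < φ`
everywhere, and the bound on the integral follows because `A e^{-t} → 0`.
-/

open Set Filter Topology

theorem HasDerivAt.nonneg_of_eventually_le_left {F : ℝ → ℝ} {d a : ℝ} (h : HasDerivAt F d a)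
    (hF : ∀ᶠ s in 𝓝[<] a, F s ≤ F a) : 0 ≤ d :=
  ge_of_tendsto (hasDerivAt_iff_tendsto_slope_left_right.1 h).1 <| by
    filter_upwards [hF, self_mem_nhdsWithin] with s hs hsa
    rw [slope_def_field]
    exact div_nonneg_of_nonpos (sub_nonpos.2 hs) (sub_neg.2 hsa).le

theorem deriv_deriv_nonpos_of_isMaxOn_Icc_of_deriv_eq_zero {f : ℝ → ℝ} {a b x : ℝ} (hab : a < b)
    (hf : ContinuousOn f (Icc a b)) (hx : x ∈ Icc a b) (hmax : IsMaxOn f (Icc a b) x)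
    (hdx : deriv f x = 0) : deriv (deriv f) x ≤ 0 := by
  by_contra! hpos
  -- `deriv f` vanishes at `x` and increases through it, so `f` rises strictly on both sides of `x`.
  have hsign :=
    nhdsWithin_le_nhds (s := {x}ᶜ) (eventually_nhdsWithin_sign_eq_of_deriv_pos hpos hdx)
  rcases hx.2.lt_or_eq with hxb | rfl
  · obtain ⟨c, hxc, hc⟩ := mem_nhdsGT_iff_exists_Ioo_subset.1 (deriv_pos_right_of_sign_deriv hsign)
    have hxc' : x < min c b := lt_min hxc hxb
    have hmono : StrictMonoOn f (Icc x (min c b)) := by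
      refine strictMonoOn_of_deriv_pos (convex_Icc _ _)
        (hf.mono (Icc_subset_Icc hx.1 (min_le_right _ _))) fun y hy => hc ?_
      rw [interior_Icc] at hy
      exact ⟨hy.1, hy.2.trans_le (min_le_left _ _)⟩
    exact (hmono (left_mem_Icc.2 hxc'.le) (right_mem_Icc.2 hxc'.le) hxc').not_ge
      (hmax ⟨hx.1.trans hxc'.le, min_le_right _ _⟩)
  · obtain ⟨c, hcx, hc⟩ := mem_nhdsLT_iff_exists_Ioo_subset.1 (deriv_neg_left_of_sign_deriv hsign)
    have hcx' : max c a < x := max_lt hcx hab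
    have hanti : StrictAntiOn f (Icc (max c a) x) := by
      refine strictAntiOn_of_deriv_neg (convex_Icc _ _)
        (hf.mono (Icc_subset_Icc (le_max_right _ _) le_rfl)) fun y hy => hc ?_
      rw [interior_Icc] at hy
      exact ⟨(le_max_left _ _).trans_lt hy.1, hy.2⟩
    exact (hanti (left_mem_Icc.2 hcx'.le) (right_mem_Icc.2 hcx'.le) hcx').not_ge
      (hmax ⟨le_max_right _ _, hcx'.le⟩)

theorem deriv_deriv_nonpos_of_isMaxOn_Icc {f : ℝ → ℝ} {a b x : ℝ} (hab : a < b)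
    (hf : ContinuousOn f (Icc a b)) (ha : deriv f a = 0) (hb : deriv f b = 0) (hx : x ∈ Icc a b)
    (hmax : IsMaxOn f (Icc a b) x) : deriv (deriv f) x ≤ 0 := by
  refine deriv_deriv_nonpos_of_isMaxOn_Icc_of_deriv_eq_zero hab hf hx hmax ?_
  rcases hx.1.eq_or_lt with rfl | hax
  · exact ha
  rcases hx.2.lt_or_eq with hxb | rfl
  · exact (hmax.isLocalMax (Icc_mem_nhds hax hxb)).deriv_eq_zero
  · exact hb

theorem exists_first_time_nonneg {X : Type*} [TopologicalSpace X] {K : Set X} (hK : IsCompact K)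
    {F : ℝ → X → ℝ} (hF : ContinuousOn (fun p : ℝ × X => F p.1 p.2) (Ici 0 ×ˢ K))
    (h0 : ∀ x ∈ K, F 0 x < 0) {t : ℝ} (ht : 0 ≤ t) {x : X} (hx : x ∈ K) (htx : 0 ≤ F t x) :
    ∃ T > 0, (∃ z ∈ K, 0 ≤ F T z) ∧ ∀ s ∈ Ico 0 T, ∀ y ∈ K, F s y < 0 := by
  set C := (Icc 0 t ×ˢ K) ∩ (fun p : ℝ × X => F p.1 p.2) ⁻¹' Ici 0
  have hC : IsCompact C :=
    (hF.mono (prod_mono Icc_subset_Ici_self subset_rfl)).upperSemicontinuousOn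
      |>.isCompact_inter_preimage_Ici (isCompact_Icc.prod hK) 0
  obtain ⟨⟨T, z⟩, ⟨⟨hT, hz⟩, hTz⟩, hmin⟩ :=
    hC.exists_isMinOn ⟨(t, x), ⟨⟨right_mem_Icc.2 ht, hx⟩, htx⟩⟩ continuousOn_fst
  refine ⟨T, hT.1.lt_of_ne ?_, ⟨z, hz, hTz⟩, fun s hs y hy => ?_⟩
  · rintro rfl
    exact (h0 z hz).not_ge hTz
  · by_contra! hsy
    exact hs.2.not_ge (hmin (a := (s, y)) ⟨⟨⟨hs.1, hs.2.le.trans hT.2⟩, hy⟩, hsy⟩)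

theorem lt_add_mul_exp_neg_of_reaction_diffusion {Dw κ1 δ A : ℝ} {u w wt : ℝ → ℝ → ℝ}
    (hDw : 0 ≤ Dw)
    (hpde : ∀ t : ℝ, 0 ≤ t → ∀ x ∈ Icc (0 : ℝ) 1,
      HasDerivAt (fun s => w s x) (wt t x) t ∧
      wt t x = Dw * deriv (deriv (w t)) x - w t x - (u t x) ^ 2 * w t x + κ1)
    (hreg : ∀ t : ℝ, 0 ≤ t →
      ContinuousOn (w t) (Icc (0 : ℝ) 1) ∧ deriv (w t) 0 = 0 ∧ deriv (w t) 1 = 0)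
    (hcw : ContinuousOn (fun p : ℝ × ℝ => w p.1 p.2) (Ici (0 : ℝ) ×ˢ Icc (0 : ℝ) 1))
    (hnn : ∀ t : ℝ, 0 ≤ t → ∀ x ∈ Icc (0 : ℝ) 1, 0 ≤ w t x)
    (hδ : 0 < δ) (hA : ∀ x ∈ Icc (0 : ℝ) 1, w 0 x ≤ κ1 + A) :
    ∀ t : ℝ, 0 ≤ t → ∀ x ∈ Icc (0 : ℝ) 1, w t x < κ1 + δ + A * Real.exp (-t) := by
  intro t ht x hx
  by_contra! htx
  obtain ⟨T, hT, ⟨y, hy, hTy⟩, hbefore⟩ :=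
    exists_first_time_nonneg (F := fun s x => w s x - (κ1 + δ + A * Real.exp (-s)))
      isCompact_Icc (hcw.sub (by fun_prop))
      (fun x hx => by simp only [neg_zero, Real.exp_zero, mul_one]; linarith [hA x hx])
      ht hx (sub_nonneg.2 htx)
  obtain ⟨hcont, hd0, hd1⟩ := hreg T hT.le
  obtain ⟨z, hz, hzmax⟩ := isCompact_Icc.exists_isMaxOn (nonempty_Icc.2 zero_le_one) hcont
  have hyz : w T y ≤ w T z := isMaxOn_iff.1 hzmax y hy
  obtain ⟨hwt, hwt_eq⟩ := hpde T hT.le z hz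
  have htime : -(A * Real.exp (-T)) ≤ wt T z := by
    have hφ : HasDerivAt (fun s => κ1 + δ + A * Real.exp (-s)) (-(A * Real.exp (-T))) T := by
      simpa using ((Real.hasDerivAt_exp (-T)).comp T (hasDerivAt_neg T)).const_mul A
        |>.const_add (κ1 + δ)
    refine sub_nonneg.1 <| (hwt.sub hφ).nonneg_of_eventually_le_left ?_
    filter_upwards [Ioo_mem_nhdsLT hT] with s hs
    simp only [Pi.sub_apply]
    linarith [hbefore s ⟨hs.1.le, hs.2⟩ z hz]
  have hspace : wt T z ≤ κ1 - w T z := by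
    have hD2 := deriv_deriv_nonpos_of_isMaxOn_Icc zero_lt_one hcont hd0 hd1 hz hzmax
    have hu : 0 ≤ u T z ^ 2 * w T z := mul_nonneg (sq_nonneg _) (hnn T hT.le z hz)
    rw [hwt_eq]
    linarith [mul_nonpos_of_nonneg_of_nonpos hDw hD2]
  linarith

theorem stmt_16_general (κ1 Dw : ℝ)
    (hDw : 0 < Dw)
    (u w wt : ℝ → ℝ → ℝ)
    (hpde : ∀ t : ℝ, 0 ≤ t → ∀ x ∈ Set.Icc (0 : ℝ) 1,
      HasDerivAt (fun s => w s x) (wt t x) t ∧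
      wt t x = Dw * deriv (deriv (w t)) x - w t x - (u t x) ^ 2 * w t x + κ1)
    (hreg : ∀ t : ℝ, 0 ≤ t →
      ContDiffOn ℝ 2 (w t) (Set.Icc (0 : ℝ) 1) ∧
      deriv (w t) 0 = 0 ∧ deriv (w t) 1 = 0)
    (hcw : ContinuousOn (fun p : ℝ × ℝ => w p.1 p.2)
      (Set.Ici (0 : ℝ) ×ˢ Set.Icc (0 : ℝ) 1))
    (hnn : ∀ t : ℝ, 0 ≤ t → ∀ x ∈ Set.Icc (0 : ℝ) 1, 0 ≤ w t x) :
    ∀ ε : ℝ, 0 < ε → ∃ T : ℝ, 0 ≤ T ∧ ∀ t : ℝ, T ≤ t →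
      ∫ x in (0 : ℝ)..1, w t x ≤ κ1 + ε := by
  intro ε hε
  obtain ⟨B, hB⟩ := isCompact_Icc.bddAbove_image (hreg 0 le_rfl).1.continuousOn
  have hbound := lt_add_mul_exp_neg_of_reaction_diffusion (δ := ε / 2) (A := B - κ1) hDw.le hpde
    (fun t ht => ⟨(hreg t ht).1.continuousOn, (hreg t ht).2⟩) hcw hnn (half_pos hε)
    (fun x hx => by linarith [hB (mem_image_of_mem _ hx)])
  obtain ⟨T, hT⟩ := eventually_atTop.1 <|
    (Real.tendsto_exp_neg_atTop_nhds_zero.const_mul (B - κ1)).eventually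
      (gt_mem_nhds (by linarith : (B - κ1) * 0 < ε / 2))
  refine ⟨max T 0, le_max_right _ _, fun t ht => ?_⟩
  have ht0 : 0 ≤ t := (le_max_right _ _).trans ht
  have hwt : ∀ x ∈ uIoc (0 : ℝ) 1, ‖w t x‖ ≤ κ1 + ε := fun x hx => by
    have hx' : x ∈ Icc (0 : ℝ) 1 := Ioc_subset_Icc_self (by simpa using hx)
    rw [Real.norm_of_nonneg (hnn t ht0 x hx')]
    linarith [hbound t ht0 x hx', hT t ((le_max_left _ _).trans ht)]
  simpa using (le_abs_self _).trans (intervalIntegral.norm_integral_le_of_norm_le_const hwt)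

/-- Uniform boundedness of the mass of `w`: for nonnegative solutions of
`∂ₜw = Dw·∂ₓₓw − w − u²·w + κ1` on `[0,1]` with homogeneous Neumann boundary conditions,
`limsup_{t→∞} ‖w(t,·)‖_{L¹(0,1)} ≤ κ1`. -/
theorem stmt_16 (a1 d1 κ1 Dw : ℝ) (ha1 : 0 < a1) (hd1 : 0 < d1) (hκ1 : 0 < κ1)
    (hDw : 0 < Dw)
    (u w wt : ℝ → ℝ → ℝ)
    (hpde : ∀ t : ℝ, 0 ≤ t → ∀ x ∈ Set.Icc (0 : ℝ) 1,
      HasDerivAt (fun s => w s x) (wt t x) t ∧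
      wt t x = Dw * deriv (deriv (w t)) x - w t x - (u t x) ^ 2 * w t x + κ1)
    (hreg : ∀ t : ℝ, 0 ≤ t →
      ContDiffOn ℝ 2 (w t) (Set.Icc (0 : ℝ) 1) ∧
      deriv (w t) 0 = 0 ∧ deriv (w t) 1 = 0)
    (hcw : ContinuousOn (fun p : ℝ × ℝ => w p.1 p.2)
      (Set.Ici (0 : ℝ) ×ˢ Set.Icc (0 : ℝ) 1))
    (hcwt : ContinuousOn (fun p : ℝ × ℝ => wt p.1 p.2)
      (Set.Ici (0 : ℝ) ×ˢ Set.Icc (0 : ℝ) 1))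
    (hnn : ∀ t : ℝ, 0 ≤ t → ∀ x ∈ Set.Icc (0 : ℝ) 1, 0 ≤ w t x) :
    ∀ ε : ℝ, 0 < ε → ∃ T : ℝ, 0 ≤ T ∧ ∀ t : ℝ, T ≤ t →
      ∫ x in (0 : ℝ)..1, w t x ≤ κ1 + ε :=
  stmt_16_general κ1 Dw hDw u w wt hpde hreg hcw hnn
end
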